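/- Let (X_n)_{n≥0} be a stationary ℝ^d-valued process and let φ : ℝ^d → ℝ be a bounded measurable function. Then for every integer p ≥ 1 and every n ≥ 1: |E[(S_n(φ))^p]| ≤ p! · n · I_n(p−1), where S_n(φ) = Σ_{i=0}^{n−1} φ(X_i). -/

import Mathlib

open MeasureTheory Finset

noncomputable section

/-- `istar i k = i_1 + ⋯ + i_k`, the partial sums of the gaps `i : Fin p → ℕ`
(so `istar i 0 = 0`). -/
def istar {p : ℕ} (i : Fin p → ℕ) (k : ℕ) : ℕ :=
  ∑ j ∈ Finset.univ.filter (fun j : Fin p => (j : ℕ) < k), i j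

/-- Stationarity of a process: all shifts have the same law. -/
def IsStationaryProcess {d : ℕ} {Ω : Type*} [MeasurableSpace Ω] (P : Measure Ω)
    (X : ℕ → Ω → (Fin d → ℝ)) : Prop :=
  ∀ k : ℕ, Measure.map (fun ω (n : ℕ) => X (n + k) ω) P =
    Measure.map (fun ω (n : ℕ) => X n ω) P

/-- The index set of `I_n(p)`: gaps `i_1,…,i_p ∈ {0,…,n-1}` with `i_1+⋯+i_p ≤ n-1`. -/
def Iset (n p : ℕ) : Finset (Fin p → ℕ) :=
  (Fintype.piFinset fun _ : Fin p => Finset.range n).filter fun i => ∑ k, i k ≤ n - 1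

/-- `I_n(p) = Σ |E[φ(X_0)φ(X_{i_1^*})⋯φ(X_{i_p^*})]|`, the sum ranging over all
`0 ≤ i_1,…,i_p ≤ n-1` with `i_1+⋯+i_p ≤ n-1`; `I_n(0) = |E[φ(X_0)]|`. -/
def Ifun {d : ℕ} {Ω : Type*} [MeasurableSpace Ω] (P : Measure Ω)
    (X : ℕ → Ω → (Fin d → ℝ)) (φ : (Fin d → ℝ) → ℝ) (n p : ℕ) : ℝ :=
  ∑ i ∈ Iset n p, |∫ ω, ∏ k ∈ Finset.range (p + 1), φ (X (istar i k) ω) ∂P|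

/-!
Expanding the `p`-th power, `E[S_n^p]` is the sum over `g ∈ {0,…,n-1}^p` of the joint moments
`E[∏ₖ φ(X_{g k})]`. Listing the times `g k` in increasing order, such a moment depends only on the
smallest time `m` and the gaps `i_1,…,i_{p-1}` between consecutive times, and by stationarity not
even on `m`. The map `g ↦ (m, i)` takes values in `{0,…,n-1} × Iset n (p-1)` and each of its
fibres consists of rearrangements of a single tuple, hence has at most `p!` elements.
-/

theorem Finset.sum_comp_le_mul_sum_of_card_fiber_le {ι κ R : Type*} [DecidableEq κ]
    [CommSemiring R] [PartialOrder R] [IsOrderedRing R]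
    {s : Finset ι} {t : Finset κ} {F : ι → κ} {h : κ → R} {N : ℕ}
    (hF : ∀ x ∈ s, F x ∈ t) (hfiber : ∀ y ∈ t, #{x ∈ s | F x = y} ≤ N)
    (hh : ∀ y ∈ t, 0 ≤ h y) :
    ∑ x ∈ s, h (F x) ≤ N * ∑ y ∈ t, h y := by
  rw [← sum_fiberwise_of_maps_to' hF, mul_sum]
  refine sum_le_sum fun y hy => ?_
  rw [sum_const, nsmul_eq_mul]
  exact mul_le_mul_of_nonneg_right (Nat.mono_cast (hfiber y hy)) (hh y hy)

section Istar

variable {q : ℕ}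

theorem istar_zero (i : Fin q → ℕ) : istar i 0 = 0 := by
  simp [istar]

theorem istar_succ (i : Fin q → ℕ) {k : ℕ} (hk : k < q) :
    istar i (k + 1) = istar i k + i ⟨k, hk⟩ := by
  have hfilter : univ.filter (fun j : Fin q => (j : ℕ) < k + 1) =
      insert ⟨k, hk⟩ (univ.filter fun j : Fin q => (j : ℕ) < k) := by
    ext j
    simp only [mem_filter, mem_univ, true_and, mem_insert, Fin.ext_iff]
    omega
  rw [istar, hfilter, sum_insert (by simp), add_comm]
  rfl

theorem istar_self (i : Fin q → ℕ) : istar i q = ∑ k, i k := by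
  rw [istar, filter_true_of_mem fun j _ => j.isLt]

def gaps (s : Fin (q + 1) → ℕ) : Fin q → ℕ :=
  fun j => s j.succ - s j.castSucc

theorem Monotone.eq_add_istar_gaps {s : Fin (q + 1) → ℕ} (hs : Monotone s) (k : Fin (q + 1)) :
    s k = s 0 + istar (gaps s) k := by
  induction k using Fin.induction with
  | zero => simp [istar_zero]
  | succ k ih =>
    have hle : s k.castSucc ≤ s k.succ := hs (Fin.castSucc_le_succ k)
    rw [Fin.val_succ, istar_succ _ k.isLt]
    simp only [Fin.val_castSucc] at ih
    simp only [gaps, Fin.eta]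
    omega

end Istar

section SortedGaps

variable {q : ℕ}

def minGaps (g : Fin (q + 1) → ℕ) : ℕ × (Fin q → ℕ) :=
  (g (Tuple.sort g 0), gaps (g ∘ Tuple.sort g))

theorem apply_sort_eq_minGaps (g : Fin (q + 1) → ℕ) (k : Fin (q + 1)) :
    g (Tuple.sort g k) = (minGaps g).1 + istar (minGaps g).2 k :=
  (Tuple.monotone_sort g).eq_add_istar_gaps k

theorem prod_comp_eq_prod_range_minGaps {M : Type*} [CommMonoid M] (f : ℕ → M)
    (g : Fin (q + 1) → ℕ) :
    ∏ k, f (g k) = ∏ k ∈ range (q + 1), f ((minGaps g).1 + istar (minGaps g).2 k) := by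
  rw [← Equiv.prod_comp (Tuple.sort g), ← Fin.prod_univ_eq_prod_range]
  simp only [apply_sort_eq_minGaps]

/-- Every tuple is a rearrangement of the increasing tuple determined by its `minGaps`. -/
theorem card_filter_minGaps_eq_le (s : Finset (Fin (q + 1) → ℕ)) (y : ℕ × (Fin q → ℕ)) :
    #{g ∈ s | minGaps g = y} ≤ (q + 1).factorial := by
  have hsub : {g ∈ s | minGaps g = y} ⊆
      univ.image fun σ : Equiv.Perm (Fin (q + 1)) =>
        (fun k : Fin (q + 1) => y.1 + istar y.2 k) ∘ σ := by
    intro g hg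
    obtain ⟨-, rfl⟩ := mem_filter.mp hg
    refine mem_image.mpr ⟨(Tuple.sort g)⁻¹, mem_univ _, funext fun k => ?_⟩
    simp [← apply_sort_eq_minGaps]
  calc #{g ∈ s | minGaps g = y} ≤ #(univ : Finset (Equiv.Perm (Fin (q + 1)))) :=
        (card_le_card hsub).trans card_image_le
    _ = (q + 1).factorial := by rw [card_univ, Fintype.card_perm, Fintype.card_fin]

theorem minGaps_mem_range_product_Iset {n : ℕ} {g : Fin (q + 1) → ℕ}
    (hg : g ∈ Fintype.piFinset fun _ => range n) :
    minGaps g ∈ range n ×ˢ Iset n q := by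
  have hlt : ∀ k, g (Tuple.sort g k) < n := fun k =>
    mem_range.mp (Fintype.mem_piFinset.mp hg _)
  have hlast := apply_sort_eq_minGaps g (Fin.last q)
  have hlast_lt := hlt (Fin.last q)
  rw [Fin.val_last, istar_self] at hlast
  refine mem_product.mpr ⟨mem_range.mpr (hlt 0), mem_filter.mpr ⟨?_, by omega⟩⟩
  exact Fintype.mem_piFinset.mpr fun k =>
    mem_range.mpr ((Nat.sub_le _ _).trans_lt (hlt k.succ))

end SortedGaps

section Stationary

variable {d : ℕ} {Ω : Type*} [MeasurableSpace Ω] {P : Measure Ω} {X : ℕ → Ω → (Fin d → ℝ)}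

theorem integrable_prod_of_abs_le [IsFiniteMeasure P] {ι : Type*} (s : Finset ι)
    {f : ι → Ω → ℝ} (hf : ∀ i ∈ s, Measurable (f i)) {c : ℝ} (hc : ∀ i ∈ s, ∀ ω, |f i ω| ≤ c) :
    Integrable (fun ω => ∏ i ∈ s, f i ω) P := by
  refine .of_bound (Finset.measurable_prod s hf).aestronglyMeasurable (c ^ #s)
    (.of_forall fun ω => ?_)
  rw [Real.norm_eq_abs, abs_prod, ← prod_const]
  exact prod_le_prod (fun i _ => abs_nonneg _) fun i hi => hc i hi ω

theorem IsStationaryProcess.integral_comp_shift (hstat : IsStationaryProcess P X)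
    (hX : ∀ n, Measurable (X n)) {F : (ℕ → Fin d → ℝ) → ℝ} (hF : Measurable F) (m : ℕ) :
    ∫ ω, F (fun i => X (i + m) ω) ∂P = ∫ ω, F (fun i => X i ω) ∂P := by
  have hshift : ∀ j, Measurable fun ω (i : ℕ) => X (i + j) ω := fun j =>
    measurable_pi_lambda _ fun i => hX (i + j)
  rw [← integral_map (hshift m).aemeasurable hF.aestronglyMeasurable, hstat m,
    integral_map (measurable_pi_lambda _ hX).aemeasurable hF.aestronglyMeasurable]

theorem IsStationaryProcess.integral_prod_eq_integral_prod_istar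
    (hstat : IsStationaryProcess P X) (hX : ∀ n, Measurable (X n))
    {φ : (Fin d → ℝ) → ℝ} (hφ : Measurable φ) {q : ℕ} (g : Fin (q + 1) → ℕ) :
    ∫ ω, ∏ k, φ (X (g k) ω) ∂P =
      ∫ ω, ∏ k ∈ range (q + 1), φ (X (istar (minGaps g).2 k) ω) ∂P := by
  have hsort : ∀ ω, ∏ k, φ (X (g k) ω) =
      ∏ k ∈ range (q + 1), φ (X (istar (minGaps g).2 k + (minGaps g).1) ω) := fun ω => by
    simp only [prod_comp_eq_prod_range_minGaps (fun i => φ (X i ω)) g, add_comm]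
  simp only [hsort]
  exact hstat.integral_comp_shift hX (F := fun y => ∏ k ∈ range (q + 1), φ (y (istar _ k)))
    (Finset.measurable_prod _ fun k _ => hφ.comp (measurable_pi_apply _)) _

end Stationary

theorem abs_moment_le_factorial_mul_Ifun_general
    {d : ℕ} {Ω : Type*} [MeasurableSpace Ω] (P : Measure Ω) [IsProbabilityMeasure P]
    (X : ℕ → Ω → (Fin d → ℝ)) (hX : ∀ n, Measurable (X n))
    (hstat : IsStationaryProcess P X)
    (φ : (Fin d → ℝ) → ℝ) (hφmeas : Measurable φ) (hφbdd : ∃ c : ℝ, ∀ x, |φ x| ≤ c)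
    (p : ℕ) (hp : 1 ≤ p) (n : ℕ) :
    |∫ ω, (∑ i ∈ Finset.range n, φ (X i ω)) ^ p ∂P| ≤
      (p.factorial : ℝ) * n * Ifun P X φ n (p - 1) := by
  obtain ⟨c, hc⟩ := hφbdd
  obtain ⟨q, rfl⟩ : ∃ q, p = q + 1 := ⟨p - 1, by omega⟩
  set A := Fintype.piFinset fun _ : Fin (q + 1) => range n
  have hint : ∀ g ∈ A, Integrable (fun ω => ∏ k, φ (X (g k) ω)) P := fun g _ =>
    integrable_prod_of_abs_le _ (fun k _ => hφmeas.comp (hX (g k))) fun _ _ _ => hc _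
  simp_rw [sum_pow', Nat.add_sub_cancel]
  rw [integral_finsetSum A hint]
  calc |∑ g ∈ A, ∫ ω, ∏ k, φ (X (g k) ω) ∂P|
      ≤ ∑ g ∈ A, |∫ ω, ∏ k, φ (X (g k) ω) ∂P| := abs_sum_le_sum_abs _ _
    _ = ∑ g ∈ A, |∫ ω, ∏ k ∈ range (q + 1), φ (X (istar (minGaps g).2 k) ω) ∂P| :=
        sum_congr rfl fun g _ => by
          rw [hstat.integral_prod_eq_integral_prod_istar hX hφmeas g]
    _ ≤ (q + 1).factorial * ∑ y ∈ range n ×ˢ Iset n q,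
          |∫ ω, ∏ k ∈ range (q + 1), φ (X (istar y.2 k) ω) ∂P| :=
        sum_comp_le_mul_sum_of_card_fiber_le (F := minGaps)
          (h := fun y => |∫ ω, ∏ k ∈ range (q + 1), φ (X (istar y.2 k) ω) ∂P|)
          (fun _ hg => minGaps_mem_range_product_Iset hg)
          (fun y _ => card_filter_minGaps_eq_le A y) fun _ _ => abs_nonneg _
    _ = (q + 1).factorial * n * Ifun P X φ n q := by
        rw [sum_product]
        dsimp only
        rw [sum_const, card_range, nsmul_eq_mul, mul_assoc, Ifun]

/-- for a stationary process and a bounded measurable `φ`,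
`|E[(S_n(φ))^p]| ≤ p! · n · I_n(p-1)`. -/
theorem abs_moment_le_factorial_mul_Ifun
    {d : ℕ} {Ω : Type*} [MeasurableSpace Ω] (P : Measure Ω) [IsProbabilityMeasure P]
    (X : ℕ → Ω → (Fin d → ℝ)) (hX : ∀ n, Measurable (X n))
    (hstat : IsStationaryProcess P X)
    (φ : (Fin d → ℝ) → ℝ) (hφmeas : Measurable φ) (hφbdd : ∃ c : ℝ, ∀ x, |φ x| ≤ c)
    (p : ℕ) (hp : 1 ≤ p) (n : ℕ) (hn : 1 ≤ n) :
    |∫ ω, (∑ i ∈ Finset.range n, φ (X i ω)) ^ p ∂P| ≤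
      (p.factorial : ℝ) * n * Ifun P X φ n (p - 1) :=
  abs_moment_le_factorial_mul_Ifun_general P X hX hstat φ hφmeas hφbdd p hp n

end
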